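/- arXiv:2104.08242 — 2 statements merged into one kernel-verified Lean document; each statement's English description precedes it below -/
import Mathlib

section
/- Assume additionally that h_I(θ_s) ≥ 0 for all s ≥ 0. Then for every t ≥ 0 the family (k(k−1) p_k ∫_0^t θ_s^{k−1} (h_I(θ_s)/h_X(θ_s)) F(t−s) ds)_{k≥2} is summable and θ_t = μ_R/μ + (μ_I/μ) F(t) + (α_S/μ) Σ_{k≥1} k p_k θ_t^{k−1} + (β α_S/μ) Σ_{k≥2} k(k−1) p_k ∫_0^t θ_s^{k−1} (h_I(θ_s)/h_X(θ_s)) F(t−s) ds. -/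
open scoped BigOperators
open Real

noncomputable def vS (αS : ℝ) (p : ℕ → ℝ) (θ : ℝ) : ℝ := αS * ∑' k : ℕ, p k * θ ^ k

noncomputable def hS (αS : ℝ) (p : ℕ → ℝ) (θ : ℝ) : ℝ := αS * ∑' k : ℕ, (k : ℝ) * p k * θ ^ k

noncomputable def hX (μ : ℝ) (θ : ℝ) : ℝ := μ * θ ^ 2

noncomputable def hR (μ μR β ρ : ℝ) (θ : ℝ) : ℝ := μR * θ + μ * ρ / β * (θ * (1 - θ))

noncomputable def hI (αS μ μR β ρ : ℝ) (p : ℕ → ℝ) (θ : ℝ) : ℝ :=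
  hX μ θ - hS αS p θ - hR μ μR β ρ θ

noncomputable def F (β ρ t : ℝ) : ℝ := ρ / (β + ρ) + β / (β + ρ) * Real.exp (-(β + ρ) * t)

/-! Since `hS θ = αS θ G(θ)` with `G = pgfDeriv p`, the equation for `θ` reads
`θ' + (β + ρ) θ = ρ + β (μR + αS G(θ)) / μ`. Treating the right side as a forcing term, and as `F`
solves `F' + (β + ρ) F = ρ` with `F 0 = 1`, variation of constants gives
`θ t = μR/μ + (1 - μR/μ) F t + (β αS/μ) ∫₀ᵗ G(θ s) e^{-(β+ρ)(t-s)} ds`.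
On the other hand, `d/ds θ_s^(k-1) = -β (k-1) θ_s^(k-1) hI/hX`, so integrating by parts against
`F (t - s)`, multiplying by `k p_k` and summing (dominated convergence, as `0 < θ ≤ 1`) expresses
the series of the theorem through `F t`, `G(θ t)` and the same integral. Comparing the two, with
`μ - μR = μI + αS λ`, gives the formula. -/

open Set intervalIntegral

-- The derivative of `x ↦ ∑ p k x ^ k`; the truncation of `k - 1` at `k = 0` is harmless there.
noncomputable def pgfDeriv (p : ℕ → ℝ) (x : ℝ) : ℝ := ∑' k : ℕ, (k : ℝ) * p k * x ^ (k - 1)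

section PowerSeries

variable {p : ℕ → ℝ}

lemma norm_natCast_mul_mul_pow_pred_le (hp : ∀ k, 0 ≤ p k) {x : ℝ} (hx : x ∈ Icc (0 : ℝ) 1)
    (k : ℕ) : ‖(k : ℝ) * p k * x ^ (k - 1)‖ ≤ k * p k := by
  have hkp : 0 ≤ (k : ℝ) * p k := mul_nonneg k.cast_nonneg (hp k)
  rw [Real.norm_of_nonneg (mul_nonneg hkp (pow_nonneg hx.1 _))]
  exact mul_le_of_le_one_right hkp (pow_le_one₀ hx.1 hx.2)

lemma hasSum_pgfDeriv (hp : ∀ k, 0 ≤ p k) (hs : Summable fun k : ℕ => (k : ℝ) * p k) {x : ℝ}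
    (hx : x ∈ Icc (0 : ℝ) 1) :
    HasSum (fun k : ℕ => (k : ℝ) * p k * x ^ (k - 1)) (pgfDeriv p x) :=
  (hs.of_norm_bounded (norm_natCast_mul_mul_pow_pred_le hp hx)).hasSum

lemma continuousOn_pgfDeriv (hp : ∀ k, 0 ≤ p k) (hs : Summable fun k : ℕ => (k : ℝ) * p k) :
    ContinuousOn (pgfDeriv p) (Icc 0 1) :=
  continuousOn_tsum (fun _ => by fun_prop) hs
    (fun k _ hx => norm_natCast_mul_mul_pow_pred_le hp hx k)

lemma tsum_natCast_mul_mul_pow_eq_mul_pgfDeriv (x : ℝ) :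
    ∑' k : ℕ, (k : ℝ) * p k * x ^ k = x * pgfDeriv p x := by
  rw [pgfDeriv, ← tsum_mul_left]
  congr 1
  funext k
  rcases k with _ | k
  · simp
  · simp only [Nat.add_sub_cancel, pow_succ]
    ring

end PowerSeries

lemma hI_div_hX_eq {αS μ μR β ρ : ℝ} {p : ℕ → ℝ} {x : ℝ} (hx : x ≠ 0) :
    hI αS μ μR β ρ p x / hX μ x =
      (μ * x - αS * pgfDeriv p x - μR - μ * ρ / β * (1 - x)) / (μ * x) := by
  rw [hI, hX, hS, hR, tsum_natCast_mul_mul_pow_eq_mul_pgfDeriv, ← mul_div_mul_left _ (μ * x) hx]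
  ring_nf

lemma continuousOn_hI_div_hX {αS μ μR β ρ : ℝ} {p : ℕ → ℝ} (hp : ∀ k, 0 ≤ p k)
    (hs : Summable fun k : ℕ => (k : ℝ) * p k) (hμ : μ ≠ 0) :
    ContinuousOn (fun x => hI αS μ μR β ρ p x / hX μ x) (Ioc 0 1) := by
  have hG := (continuousOn_pgfDeriv hp hs).mono Ioc_subset_Icc_self
  refine ContinuousOn.congr ?_ fun x hx => hI_div_hX_eq hx.1.ne'
  fun_prop (disch := exact fun x hx => mul_ne_zero hμ hx.1.ne')

lemma neg_mul_mul_hI_div_hX_eq {αS μ μR β ρ : ℝ} {p : ℕ → ℝ} {x : ℝ} (hμ : μ ≠ 0) (hβ : β ≠ 0)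
    (hx : x ≠ 0) :
    -β * x * (hI αS μ μR β ρ p x / hX μ x) =
      -(β + ρ) * x + ρ + β * (μR + αS * pgfDeriv p x) / μ := by
  rw [hI_div_hX_eq hx]
  field_simp
  ring

lemma hasDerivAt_F {β ρ : ℝ} (hc : β + ρ ≠ 0) (x : ℝ) :
    HasDerivAt (F β ρ) (-β * exp (-(β + ρ) * x)) x := by
  have h := (((hasDerivAt_id' x).const_mul (-(β + ρ))).exp.const_mul (β / (β + ρ))).const_add
    (ρ / (β + ρ))
  refine h.congr_deriv ?_
  field_simp

lemma F_zero {β ρ : ℝ} (hc : β + ρ ≠ 0) : F β ρ 0 = 1 := by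
  simp only [F, mul_zero, exp_zero, mul_one]
  field_simp
  ring

lemma neg_mul_F_add {β ρ : ℝ} (hc : β + ρ ≠ 0) (x : ℝ) :
    -(β + ρ) * F β ρ x + ρ = -β * exp (-(β + ρ) * x) := by
  simp only [F]
  field_simp
  ring

lemma eq_exp_mul_add_integral_of_hasDerivAt {f g : ℝ → ℝ} {c a b : ℝ}
    (hf : ∀ s ∈ uIcc a b, HasDerivAt f (-c * f s + g s) s) (hg : ContinuousOn g (uIcc a b)) :
    f b = exp (-c * (b - a)) * f a + ∫ s in a..b, g s * exp (-c * (b - s)) := by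
  have hderiv : ∀ s ∈ uIcc a b, HasDerivAt (fun s => exp (c * s) * f s) (g s * exp (c * s)) s := by
    intro s hs
    refine (((hasDerivAt_id' s).const_mul c).exp.mul (hf s hs)).congr_deriv ?_
    ring
  have hint := integral_eq_sub_of_hasDerivAt hderiv
    ((hg.mul (by fun_prop)).intervalIntegrable)
  have hsplit : ∀ s, g s * exp (-c * (b - s)) = exp (-c * b) * (g s * exp (c * s)) := by
    intro s
    rw [mul_left_comm, ← exp_add]
    congr 2
    ring
  simp_rw [hsplit, integral_const_mul, hint]
  have hb : exp (-c * b) * exp (c * b) = 1 := by rw [← exp_add]; simp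
  have ha : exp (-c * b) * exp (c * a) = exp (-c * (b - a)) := by rw [← exp_add]; ring_nf
  linear_combination (f b) * hb.symm + f a * ha

lemma hasSum_natCast_mul_integral_pow_pred {p : ℕ → ℝ} (hp : ∀ k, 0 ≤ p k)
    (hs : Summable fun k : ℕ => (k : ℝ) * p k) {θ w : ℝ → ℝ} {a b : ℝ}
    (hθ : ContinuousOn θ (uIcc a b)) (hθmem : MapsTo θ (uIcc a b) (Icc 0 1))
    (hw : ContinuousOn w (uIcc a b)) :
    HasSum (fun k : ℕ => (k : ℝ) * p k * ∫ s in a..b, θ s ^ (k - 1) * w s)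
      (∫ s in a..b, pgfDeriv p (θ s) * w s) := by
  simp_rw [← integral_const_mul]
  refine hasSum_integral_of_dominated_convergence (fun k s => k * p k * ‖w s‖)
    (fun k => ?_) (fun k => ?_) ?_ ?_ ?_
  · exact ((by fun_prop : ContinuousOn _ (uIcc a b)).mono uIoc_subset_uIcc).aestronglyMeasurable
      measurableSet_uIoc
  · refine Filter.Eventually.of_forall fun s hs => ?_
    rw [← mul_assoc, norm_mul]
    exact mul_le_mul_of_nonneg_right
      (norm_natCast_mul_mul_pow_pred_le hp (hθmem (uIoc_subset_uIcc hs)) k) (norm_nonneg _)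
  · exact Filter.Eventually.of_forall fun s _ => hs.mul_right _
  · simp_rw [tsum_mul_right]
    exact (continuousOn_const.mul hw.norm).intervalIntegrable
  · refine Filter.Eventually.of_forall fun s hsab => ?_
    simpa only [mul_assoc] using
      (hasSum_pgfDeriv hp hs (hθmem (uIoc_subset_uIcc hsab))).mul_right (w s)

section

variable {θ q : ℝ → ℝ} {β ρ t : ℝ}

lemma integral_pow_mul_F_eq (hθ : ∀ s ∈ Icc 0 t, HasDerivAt θ (-β * θ s * q s) s)
    (hq : ContinuousOn q (Icc 0 t)) (hθ0 : θ 0 = 1) (hc : β + ρ ≠ 0) (ht : 0 ≤ t) (m : ℕ) :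
    β * m * ∫ s in 0..t, θ s ^ m * q s * F β ρ (t - s) =
      F β ρ t - θ t ^ m + β * ∫ s in 0..t, θ s ^ m * exp (-(β + ρ) * (t - s)) := by
  have hθc : ContinuousOn θ (Icc 0 t) := fun s hs => (hθ s hs).continuousAt.continuousWithinAt
  have hF : Continuous (F β ρ) :=
    continuous_iff_continuousAt.2 fun x => (hasDerivAt_F hc x).continuousAt
  have hderiv : ∀ s ∈ uIcc 0 t, HasDerivAt (fun s => θ s ^ m * F β ρ (t - s))
      (-(β * m) * (θ s ^ m * q s * F β ρ (t - s)) +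
        β * (θ s ^ m * exp (-(β + ρ) * (t - s)))) s := by
    intro s hs
    rw [uIcc_of_le ht] at hs
    refine (((hθ s hs).fun_pow m).mul
      ((hasDerivAt_F hc (t - s)).comp s ((hasDerivAt_id' s).const_sub t))).congr_deriv ?_
    rw [Function.comp_apply]
    rcases Nat.eq_zero_or_pos m with rfl | hm
    · simp
    · rw [← pow_sub_one_mul hm.ne' (θ s)]
      ring
  have h1 : IntervalIntegrable (fun s => θ s ^ m * q s * F β ρ (t - s))
      MeasureTheory.volume 0 t :=
    ContinuousOn.intervalIntegrable_of_Icc ht (by fun_prop)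
  have h2 : IntervalIntegrable (fun s => θ s ^ m * exp (-(β + ρ) * (t - s)))
      MeasureTheory.volume 0 t :=
    ContinuousOn.intervalIntegrable_of_Icc ht (by fun_prop)
  have hftc := integral_eq_sub_of_hasDerivAt hderiv ((h1.const_mul _).add (h2.const_mul _))
  rw [integral_add (h1.const_mul _) (h2.const_mul _), integral_const_mul, integral_const_mul,
    hθ0, sub_self, sub_zero, F_zero hc, one_pow, one_mul, mul_one] at hftc
  linear_combination -hftc

lemma hasSum_natCast_mul_sub_one_mul_integral {p : ℕ → ℝ} (hp : ∀ k, 0 ≤ p k)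
    (hs : Summable fun k : ℕ => (k : ℝ) * p k)
    (hθ : ∀ s ∈ Icc 0 t, HasDerivAt θ (-β * θ s * q s) s) (hq : ContinuousOn q (Icc 0 t))
    (hθ0 : θ 0 = 1) (hθmem : MapsTo θ (Icc 0 t) (Icc 0 1)) (hβ : β ≠ 0) (hc : β + ρ ≠ 0)
    (ht : 0 ≤ t) :
    HasSum (fun k : ℕ => (k : ℝ) * ((k : ℝ) - 1) * p k *
        ∫ s in 0..t, θ s ^ (k - 1) * q s * F β ρ (t - s))
      (((∑' k : ℕ, (k : ℝ) * p k) * F β ρ t - pgfDeriv p (θ t)) / β +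
        ∫ s in 0..t, pgfDeriv p (θ s) * exp (-(β + ρ) * (t - s))) := by
  have hθc : ContinuousOn θ (Icc 0 t) := fun s hs => (hθ s hs).continuousAt.continuousWithinAt
  rw [← uIcc_of_le ht] at hθc hθmem
  have hsum := (((hs.hasSum.mul_right (F β ρ t)).sub
    (hasSum_pgfDeriv hp hs (hθmem (right_mem_uIcc)))).div_const β).add
    (hasSum_natCast_mul_integral_pow_pred hp hs hθc hθmem
      (w := fun s => exp (-(β + ρ) * (t - s))) (by fun_prop))
  refine hsum.congr_fun fun k => ?_
  rcases k with _ | m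
  · simp
  · have hB := integral_pow_mul_F_eq hθ hq hθ0 hc ht m
    simp only [Nat.add_sub_cancel]
    push_cast
    rw [add_sub_cancel_right, div_add' _ _ _ hβ, eq_div_iff hβ]
    linear_combination ((m : ℝ) + 1) * p (m + 1) * hB

lemma eq_add_F_add_integral_pgfDeriv {p : ℕ → ℝ} {αS μ μR : ℝ}
    (hθ : ∀ s ∈ Icc 0 t,
      HasDerivAt θ (-(β + ρ) * θ s + ρ + β * (μR + αS * pgfDeriv p (θ s)) / μ) s)
    (hG : ContinuousOn (fun s => pgfDeriv p (θ s)) (Icc 0 t)) (hθ0 : θ 0 = 1) (hμ : μ ≠ 0)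
    (hc : β + ρ ≠ 0) (ht : 0 ≤ t) :
    θ t = μR / μ + (1 - μR / μ) * F β ρ t +
      β * αS / μ * ∫ s in 0..t, pgfDeriv p (θ s) * exp (-(β + ρ) * (t - s)) := by
  set u : ℝ → ℝ := fun s => θ s - μR / μ - (1 - μR / μ) * F β ρ s
  have hu : ∀ s ∈ uIcc 0 t,
      HasDerivAt u (-(β + ρ) * u s + β * αS / μ * pgfDeriv p (θ s)) s := by
    intro s hs
    rw [uIcc_of_le ht] at hs
    refine (((hθ s hs).sub_const _).sub ((hasDerivAt_F hc s).const_mul _)).congr_deriv ?_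
    rw [← neg_mul_F_add hc]
    simp only [u]
    field_simp
    ring
  have hu0 : u 0 = 0 := by simp [u, hθ0, F_zero hc]
  have hduhamel := eq_exp_mul_add_integral_of_hasDerivAt hu
    (by rw [uIcc_of_le ht]; fun_prop)
  simp_rw [hu0, mul_zero, zero_add, mul_assoc, integral_const_mul] at hduhamel
  simp only [u] at hduhamel
  linear_combination hduhamel

end

theorem stmt3_general
    (β ρ μ μS μI μR αS : ℝ) (p : ℕ → ℝ) (θ : ℝ → ℝ)
    (hβ : 0 < β) (hρ : 0 ≤ ρ) (hμ : 0 < μ)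
    (hμsum : μS + μI + μR = μ)
    (hp : ∀ k, 0 ≤ p k)
    (hmeanSummable : Summable (fun k : ℕ => (k : ℝ) * p k))
    (hμSdef : μS = αS * ∑' k : ℕ, (k : ℝ) * p k)
    (hθ0 : θ 0 = 1)
    (hθmem : ∀ t, 0 ≤ t → θ t ∈ Set.Ioc (0 : ℝ) 1)
    (hθderiv : ∀ t, 0 ≤ t →
      HasDerivAt θ (-β * θ t * hI αS μ μR β ρ p (θ t) / hX μ (θ t)) t)
    (t : ℝ) (ht : 0 ≤ t) :
    Summable (fun k : ℕ => (k : ℝ) * ((k : ℝ) - 1) * p k *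
      ∫ s in (0 : ℝ)..t,
        θ s ^ (k - 1) * (hI αS μ μR β ρ p (θ s) / hX μ (θ s)) * F β ρ (t - s)) ∧
    θ t = μR / μ + μI / μ * F β ρ t +
      αS / μ * (∑' k : ℕ, (k : ℝ) * p k * θ t ^ (k - 1)) +
      β * αS / μ *
        ∑' k : ℕ, (k : ℝ) * ((k : ℝ) - 1) * p k *
          ∫ s in (0 : ℝ)..t,
            θ s ^ (k - 1) * (hI αS μ μR β ρ p (θ s) / hX μ (θ s)) * F β ρ (t - s) := by
  have hc : β + ρ ≠ 0 := by positivity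
  have hmaps : MapsTo θ (Icc 0 t) (Ioc 0 1) := fun s hs => hθmem s hs.1
  have hmaps' := hmaps.mono_right Ioc_subset_Icc_self
  have hθ' : ∀ s ∈ Icc 0 t,
      HasDerivAt θ (-β * θ s * (hI αS μ μR β ρ p (θ s) / hX μ (θ s))) s :=
    fun s hs => (hθderiv s hs.1).congr_deriv (mul_div_assoc _ _ _)
  have hθc : ContinuousOn θ (Icc 0 t) :=
    fun s hs => (hθ' s hs).continuousAt.continuousWithinAt
  have hlin : ∀ s ∈ Icc 0 t,
      HasDerivAt θ (-(β + ρ) * θ s + ρ + β * (μR + αS * pgfDeriv p (θ s)) / μ) s :=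
    fun s hs => (hθ' s hs).congr_deriv
      (neg_mul_mul_hI_div_hX_eq hμ.ne' hβ.ne' (hmaps hs).1.ne')
  have hsum := hasSum_natCast_mul_sub_one_mul_integral hp hmeanSummable hθ'
    ((continuousOn_hI_div_hX hp hmeanSummable hμ.ne').comp hθc hmaps) hθ0 hmaps' hβ.ne' hc ht
  refine ⟨hsum.summable, ?_⟩
  rw [hsum.tsum_eq, eq_add_F_add_integral_pgfDeriv hlin
    ((continuousOn_pgfDeriv hp hmeanSummable).comp hθc hmaps') hθ0 hμ.ne' hc ht, pgfDeriv]
  field_simp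
  linear_combination (F β ρ t) * (hμSdef - hμsum)

theorem stmt3
    (β ρ μ μS μI μR αS : ℝ) (p : ℕ → ℝ) (θ : ℝ → ℝ)
    (hβ : 0 < β) (hρ : 0 ≤ ρ) (hμ : 0 < μ)
    (hμS : 0 ≤ μS) (hμI : 0 ≤ μI) (hμR : 0 ≤ μR)
    (hμsum : μS + μI + μR = μ)
    (hαS : αS ∈ Set.Ioc (0 : ℝ) 1)
    (hp : ∀ k, 0 ≤ p k)
    (hpsummable : Summable p)
    (hpsum : ∑' k : ℕ, p k = 1)
    (hmeanSummable : Summable (fun k : ℕ => (k : ℝ) * p k))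
    (hmeanPos : 0 < ∑' k : ℕ, (k : ℝ) * p k)
    (hμSdef : μS = αS * ∑' k : ℕ, (k : ℝ) * p k)
    (hθ0 : θ 0 = 1)
    (hθmem : ∀ t, 0 ≤ t → θ t ∈ Set.Ioc (0 : ℝ) 1)
    (hθderiv : ∀ t, 0 ≤ t →
      HasDerivAt θ (-β * θ t * hI αS μ μR β ρ p (θ t) / hX μ (θ t)) t)
    (hIpos : ∀ s, 0 ≤ s → 0 ≤ hI αS μ μR β ρ p (θ s))
    (t : ℝ) (ht : 0 ≤ t) :
    Summable (fun k : ℕ => (k : ℝ) * ((k : ℝ) - 1) * p k *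
      ∫ s in (0 : ℝ)..t,
        θ s ^ (k - 1) * (hI αS μ μR β ρ p (θ s) / hX μ (θ s)) * F β ρ (t - s)) ∧
    θ t = μR / μ + μI / μ * F β ρ t +
      αS / μ * (∑' k : ℕ, (k : ℝ) * p k * θ t ^ (k - 1)) +
      β * αS / μ *
        ∑' k : ℕ, (k : ℝ) * ((k : ℝ) - 1) * p k *
          ∫ s in (0 : ℝ)..t,
            θ s ^ (k - 1) * (hI αS μ μR β ρ p (θ s) / hX μ (θ s)) * F β ρ (t - s) :=
  stmt3_general β ρ μ μS μI μR αS p θ hβ hρ hμ hμsum hp hmeanSummable hμSdef hθ0 hθmem hθderiv t ht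
end

section
/- Define h̃_R(t) = μ_R θ_t + μ_I θ_t (ρ/(β+ρ))(1 − e^{−(β+ρ)t}) + α_S Σ_{k≥1} k p_k θ_t (−∫_0^t (d/ds θ_s^{k−1}) (ρ/(β+ρ))(1 − e^{−(β+ρ)(t−s)}) ds). Then for every t ≥ 0 the series defining h̃_R(t) converges and h̃_R(t) = h_R(θ_t), i.e. h̃_R(t) = μ_R θ_t + (μρ/β) θ_t (1 − θ_t). -/
open scoped BigOperators
open Real

/-!
Integrating by parts against the kernel `K u = ρ/(β+ρ) (1 - e^{-(β+ρ) u})`, which vanishes at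
`u = 0`, turns the `k`-th integral into `K t - ρ ∫₀ᵗ θₛ^{k-1} e^{-(β+ρ)(t-s)} ds` (as `θ₀ = 1`).
Since `|θ| ≤ 1` and `∑ k p_k < ∞`, the sum over `k` passes under the integral. Dividing the ODE
by `θ` gives `α_S ∑ k p_k θ^{k-1} = (μ/β) (θ' + (β+ρ) θ) - (μ_R + μρ/β)`, and against the weight
`e^{-(β+ρ)(t-s)}` the combination `θ' + (β+ρ) θ` integrates to `θ_t - e^{-(β+ρ)t}`; what remains
is algebra.
-/

open Set intervalIntegral MeasureTheory
open scoped Interval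

theorem norm_mul_pow_le_norm (q : ℝ) {x : ℝ} (hx : |x| ≤ 1) (n : ℕ) : ‖q * x ^ n‖ ≤ ‖q‖ := by
  rw [norm_mul, norm_pow]
  exact mul_le_of_le_one_right (norm_nonneg q) (pow_le_one₀ (norm_nonneg x) hx)

theorem continuousOn_tsum_mul_pow {q : ℕ → ℝ} (hq : Summable q) (n : ℕ → ℕ) :
    ContinuousOn (fun x => ∑' k, q k * x ^ n k) (Icc (-1) 1) :=
  continuousOn_tsum (fun _ => (continuous_const.mul (continuous_pow _)).continuousOn)
    hq.norm fun _ _ hx => norm_mul_pow_le_norm _ (abs_le.2 hx) _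

theorem hasSum_intervalIntegral_mul_pow_mul {q : ℕ → ℝ} (hq : Summable q) (n : ℕ → ℕ)
    {x w : ℝ → ℝ} {a b : ℝ} (hx : ContinuousOn x [[a, b]]) (hxabs : ∀ s ∈ [[a, b]], |x s| ≤ 1)
    (hw : ContinuousOn w [[a, b]]) :
    HasSum (fun k => ∫ s in a..b, q k * x s ^ n k * w s)
      (∫ s in a..b, (∑' k, q k * x s ^ n k) * w s) := by
  have hsub : Ι a b ⊆ [[a, b]] := uIoc_subset_uIcc
  refine hasSum_integral_of_dominated_convergence (fun k s => ‖q k‖ * ‖w s‖)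
    (fun k => ((continuousOn_const.mul (hx.pow _)).mul hw).mono hsub
      |>.aestronglyMeasurable measurableSet_uIoc) ?_ ?_ ?_ ?_
  · refine fun k => Filter.Eventually.of_forall fun s hs => ?_
    rw [norm_mul]
    gcongr
    exact norm_mul_pow_le_norm _ (hxabs s (hsub hs)) _
  · exact Filter.Eventually.of_forall fun s _ => hq.norm.mul_right _
  · simp_rw [tsum_mul_right]
    exact (continuousOn_const.mul hw.norm).intervalIntegrable
  · refine Filter.Eventually.of_forall fun s hs => ?_
    exact (hq.norm.of_norm_bounded fun k =>
      norm_mul_pow_le_norm _ (hxabs s (hsub hs)) _).hasSum.mul_right (w s)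

theorem hasDerivAt_exp_neg_mul_sub (c t s : ℝ) :
    HasDerivAt (fun u => exp (-c * (t - u))) (c * exp (-c * (t - s))) s := by
  have := (((hasDerivAt_id s).const_sub t).const_mul (-c)).exp
  exact this.congr_deriv (by simp; ring)

theorem integral_add_mul_mul_exp_neg_mul_sub {f f' : ℝ → ℝ} {c t : ℝ}
    (hf : ∀ s ∈ [[0, t]], HasDerivAt f (f' s) s) (hf' : IntervalIntegrable f' volume 0 t) :
    ∫ s in (0)..t, (f' s + c * f s) * exp (-c * (t - s)) = f t - f 0 * exp (-c * t) := by
  have hfc : ContinuousOn f [[0, t]] := fun s hs => (hf s hs).continuousAt.continuousWithinAt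
  have hexp : Continuous fun s => exp (-c * (t - s)) := by fun_prop
  have hint : IntervalIntegrable (fun s => (f' s + c * f s) * exp (-c * (t - s))) volume 0 t :=
    (hf'.add (continuousOn_const.mul hfc).intervalIntegrable).mul_continuousOn hexp.continuousOn
  rw [integral_eq_sub_of_hasDerivAt (f := fun s => f s * exp (-c * (t - s)))
    (fun s hs => ((hf s hs).mul (hasDerivAt_exp_neg_mul_sub c t s)).congr_deriv (by ring)) hint]
  simp

theorem integral_deriv_mul_one_sub_exp {f f' : ℝ → ℝ} {c ρ t : ℝ} (hc : c ≠ 0)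
    (hf : ∀ s ∈ [[0, t]], HasDerivAt f (f' s) s) (hf' : IntervalIntegrable f' volume 0 t) :
    ∫ s in (0)..t, f' s * (ρ / c * (1 - exp (-c * (t - s)))) =
      -(f 0 * (ρ / c * (1 - exp (-c * t)))) + ρ * ∫ s in (0)..t, f s * exp (-c * (t - s)) := by
  have hK : ∀ s ∈ [[0, t]], HasDerivAt (fun u => ρ / c * (1 - exp (-c * (t - u))))
      (-(ρ * exp (-c * (t - s)))) s := fun s _ =>
    (((hasDerivAt_exp_neg_mul_sub c t s).const_sub 1).const_mul (ρ / c)).congr_deriv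
      (by field_simp)
  have h := intervalIntegral.integral_mul_deriv_eq_deriv_mul hK hf
    ((by fun_prop : Continuous fun s => -(ρ * exp (-c * (t - s)))).intervalIntegrable 0 t) hf'
  simp_rw [mul_comm (f' _)] at h ⊢
  have hKf : ∫ s in (0)..t, -(ρ * exp (-c * (t - s))) * f s =
      -(ρ * ∫ s in (0)..t, f s * exp (-c * (t - s))) := by
    rw [← intervalIntegral.integral_const_mul, ← intervalIntegral.integral_neg]
    congr 1 with s
    ring
  rw [h, hKf]
  simp only [sub_self, mul_zero, exp_zero, sub_zero]
  ring

theorem hasSum_mul_neg_integral_deriv_pow_mul {q : ℕ → ℝ} (hq : Summable q) {θ : ℝ → ℝ}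
    {c ρ t : ℝ} (hc : c ≠ 0) (hθ : ∀ s ∈ [[0, t]], HasDerivAt θ (deriv θ s) s)
    (hθ' : ContinuousOn (deriv θ) [[0, t]]) (hθabs : ∀ s ∈ [[0, t]], |θ s| ≤ 1) (hθ0 : θ 0 = 1)
    (y : ℝ) :
    HasSum (fun k => q k * y *
        -∫ s in (0)..t, deriv (fun u => θ u ^ (k - 1)) s * (ρ / c * (1 - exp (-c * (t - s)))))
      ((∑' k, q k) * (y * (ρ / c * (1 - exp (-c * t)))) -
        y * ρ * ∫ s in (0)..t, (∑' k, q k * θ s ^ (k - 1)) * exp (-c * (t - s))) := by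
  have hθc : ContinuousOn θ [[0, t]] := fun s hs => (hθ s hs).continuousAt.continuousWithinAt
  have hterm : ∀ k, q k * y *
      -∫ s in (0)..t, deriv (fun u => θ u ^ (k - 1)) s * (ρ / c * (1 - exp (-c * (t - s)))) =
      q k * (y * (ρ / c * (1 - exp (-c * t)))) -
        y * ρ * ∫ s in (0)..t, q k * θ s ^ (k - 1) * exp (-c * (t - s)) := by
    intro k
    have hpow : ∀ s ∈ [[0, t]], HasDerivAt (fun u => θ u ^ (k - 1))
        ((k - 1 : ℕ) * θ s ^ (k - 1 - 1) * deriv θ s) s := fun s hs => (hθ s hs).pow _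
    have hpow' : ContinuousOn (deriv fun u => θ u ^ (k - 1)) [[0, t]] :=
      ((continuousOn_const.mul (hθc.pow _)).mul hθ').congr fun s hs => (hpow s hs).deriv
    rw [integral_deriv_mul_one_sub_exp hc
      (fun s hs => (hpow s hs).differentiableAt.hasDerivAt) hpow'.intervalIntegrable, hθ0]
    simp_rw [mul_assoc (q k), intervalIntegral.integral_const_mul]
    ring
  have hexp : ContinuousOn (fun s => exp (-c * (t - s))) [[0, t]] := by fun_prop
  simp only [hterm]
  exact (hq.hasSum.mul_right _).sub
    ((hasSum_intervalIntegral_mul_pow_mul hq (· - 1) hθc hθabs hexp).mul_left (y * ρ))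

theorem tsum_mul_pow_eq_mul_tsum_mul_pow_pred (p : ℕ → ℝ) (x : ℝ) :
    ∑' k : ℕ, (k : ℝ) * p k * x ^ k = x * ∑' k : ℕ, (k : ℝ) * p k * x ^ (k - 1) := by
  rw [← tsum_mul_left]
  congr 1 with (_ | k)
  · simp
  · simp only [Nat.cast_succ, Nat.add_sub_cancel, pow_succ]
    ring

theorem neg_mul_mul_hI_div_hX {αS μ μR β ρ : ℝ} (p : ℕ → ℝ) (hβ : β ≠ 0) (hμ : μ ≠ 0) {x : ℝ}
    (hx : x ≠ 0) :
    -β * x * hI αS μ μR β ρ p x / hX μ x =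
      β / μ * (αS * ∑' k : ℕ, (k : ℝ) * p k * x ^ (k - 1) + μR) + ρ - (β + ρ) * x := by
  rw [hI, hS, hX, hR, tsum_mul_pow_eq_mul_tsum_mul_pow_pred]
  field_simp
  ring

section Solution

variable {αS μ μR β ρ : ℝ} {p : ℕ → ℝ} {θ : ℝ → ℝ} (hβ : β ≠ 0) (hμ : μ ≠ 0)
  (hθmem : ∀ t, 0 ≤ t → θ t ∈ Ioc (0 : ℝ) 1)
  (hθderiv : ∀ t, 0 ≤ t → HasDerivAt θ (-β * θ t * hI αS μ μR β ρ p (θ t) / hX μ (θ t)) t)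
include hβ hμ hθmem hθderiv

theorem deriv_eq_of_hasDerivAt_hI {s : ℝ} (hs : 0 ≤ s) :
    deriv θ s =
      β / μ * (αS * ∑' k : ℕ, (k : ℝ) * p k * θ s ^ (k - 1) + μR) + ρ - (β + ρ) * θ s := by
  rw [(hθderiv s hs).deriv, neg_mul_mul_hI_div_hX p hβ hμ (hθmem s hs).1.ne']

theorem continuousOn_deriv_of_hasDerivAt_hI (hmean : Summable fun k : ℕ => (k : ℝ) * p k) :
    ContinuousOn (deriv θ) (Ici 0) := by
  have hθc : ContinuousOn θ (Ici 0) := fun s hs =>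
    (hθderiv s hs).continuousAt.continuousWithinAt
  have hmaps : MapsTo θ (Ici 0) (Icc (-1) 1) := fun s hs =>
    ⟨by linarith [(hθmem s hs).1], (hθmem s hs).2⟩
  have hg := (continuousOn_tsum_mul_pow hmean (· - 1)).comp hθc hmaps
  refine ContinuousOn.congr ?_ fun s hs => deriv_eq_of_hasDerivAt_hI hβ hμ hθmem hθderiv hs
  exact ((continuousOn_const.mul ((continuousOn_const.mul hg).add continuousOn_const)).add
    continuousOn_const).sub (continuousOn_const.mul hθc)

theorem mul_integral_tsum_mul_pow_pred_mul_exp (hc : β + ρ ≠ 0)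
    (hmean : Summable fun k : ℕ => (k : ℝ) * p k) {t : ℝ} (ht : 0 ≤ t) :
    αS * ∫ s in (0)..t,
        (∑' k : ℕ, (k : ℝ) * p k * θ s ^ (k - 1)) * exp (-(β + ρ) * (t - s)) =
      μ / β * (θ t - θ 0 * exp (-(β + ρ) * t)) -
        (μR + μ * ρ / β) / (β + ρ) * (1 - exp (-(β + ρ) * t)) := by
  have hsub : [[0, t]] ⊆ Ici 0 := by rw [uIcc_of_le ht]; exact Icc_subset_Ici_self
  -- by the ODE, this `f` satisfies `f' + (β + ρ) f = αS ∑ k p_k θ^(k-1)`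
  have hf : ∀ s ∈ [[0, t]], HasDerivAt (fun u => μ / β * θ u - (μR + μ * ρ / β) / (β + ρ))
      (μ / β * deriv θ s) s := fun s hs =>
    (((hθderiv s (hsub hs)).differentiableAt.hasDerivAt).const_mul _).sub_const _
  have hf' : IntervalIntegrable (fun s => μ / β * deriv θ s) volume 0 t :=
    ((continuousOn_deriv_of_hasDerivAt_hI hβ hμ hθmem hθderiv hmean).mono hsub).const_mul _
      |>.intervalIntegrable
  rw [← intervalIntegral.integral_const_mul]
  refine (intervalIntegral.integral_congr fun s hs => ?_).trans
    ((integral_add_mul_mul_exp_neg_mul_sub hf hf').trans (by ring))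
  rw [deriv_eq_of_hasDerivAt_hI hβ hμ hθmem hθderiv (hsub hs)]
  field_simp
  ring

end Solution

theorem stmt8_general
    (β ρ μ μS μI μR αS : ℝ) (p : ℕ → ℝ) (θ : ℝ → ℝ)
    (hβ : 0 < β) (hρ : 0 ≤ ρ) (hμ : 0 < μ)
    (hμsum : μS + μI + μR = μ)
    (hmeanSummable : Summable (fun k : ℕ => (k : ℝ) * p k))
    (hμSdef : μS = αS * ∑' k : ℕ, (k : ℝ) * p k)
    (hθ0 : θ 0 = 1)
    (hθmem : ∀ t, 0 ≤ t → θ t ∈ Set.Ioc (0 : ℝ) 1)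
    (hθderiv : ∀ t, 0 ≤ t →
      HasDerivAt θ (-β * θ t * hI αS μ μR β ρ p (θ t) / hX μ (θ t)) t)
    (t : ℝ) (ht : 0 ≤ t) :
    Summable (fun k : ℕ => (k : ℝ) * p k * θ t *
      -∫ s in (0 : ℝ)..t,
          deriv (fun u => θ u ^ (k - 1)) s *
            (ρ / (β + ρ) * (1 - Real.exp (-(β + ρ) * (t - s))))) ∧
    μR * θ t + μI * θ t * (ρ / (β + ρ)) * (1 - Real.exp (-(β + ρ) * t)) +
        αS * ∑' k : ℕ, (k : ℝ) * p k * θ t *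
          -∫ s in (0 : ℝ)..t,
              deriv (fun u => θ u ^ (k - 1)) s *
                (ρ / (β + ρ) * (1 - Real.exp (-(β + ρ) * (t - s)))) =
      μR * θ t + μ * ρ / β * θ t * (1 - θ t) := by
  have hc : β + ρ ≠ 0 := by positivity
  have hsub : [[0, t]] ⊆ Ici 0 := by rw [uIcc_of_le ht]; exact Icc_subset_Ici_self
  have hsum := hasSum_mul_neg_integral_deriv_pow_mul hmeanSummable (ρ := ρ) hc
    (fun s hs => (hθderiv s (hsub hs)).differentiableAt.hasDerivAt)
    ((continuousOn_deriv_of_hasDerivAt_hI hβ.ne' hμ.ne' hθmem hθderiv hmeanSummable).mono hsub)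
    (fun s hs => abs_le.2 ⟨by linarith [(hθmem s (hsub hs)).1], (hθmem s (hsub hs)).2⟩) hθ0
    (θ t)
  have hint := mul_integral_tsum_mul_pow_pred_mul_exp hβ.ne' hμ.ne' hθmem hθderiv hc
    hmeanSummable ht
  refine ⟨hsum.summable, ?_⟩
  rw [hsum.tsum_eq, show μI = μ - μS - μR by linarith, hμSdef]
  rw [hθ0] at hint
  linear_combination (norm := skip) (-(θ t * ρ)) * hint
  field_simp
  ring

theorem stmt8
    (β ρ μ μS μI μR αS : ℝ) (p : ℕ → ℝ) (θ : ℝ → ℝ)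
    (hβ : 0 < β) (hρ : 0 ≤ ρ) (hμ : 0 < μ)
    (hμS : 0 ≤ μS) (hμI : 0 ≤ μI) (hμR : 0 ≤ μR)
    (hμsum : μS + μI + μR = μ)
    (hαS : αS ∈ Set.Ioc (0 : ℝ) 1)
    (hp : ∀ k, 0 ≤ p k)
    (hpsummable : Summable p)
    (hpsum : ∑' k : ℕ, p k = 1)
    (hmeanSummable : Summable (fun k : ℕ => (k : ℝ) * p k))
    (hmeanPos : 0 < ∑' k : ℕ, (k : ℝ) * p k)
    (hμSdef : μS = αS * ∑' k : ℕ, (k : ℝ) * p k)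
    (hθ0 : θ 0 = 1)
    (hθmem : ∀ t, 0 ≤ t → θ t ∈ Set.Ioc (0 : ℝ) 1)
    (hθderiv : ∀ t, 0 ≤ t →
      HasDerivAt θ (-β * θ t * hI αS μ μR β ρ p (θ t) / hX μ (θ t)) t)
    (t : ℝ) (ht : 0 ≤ t) :
    Summable (fun k : ℕ => (k : ℝ) * p k * θ t *
      -∫ s in (0 : ℝ)..t,
          deriv (fun u => θ u ^ (k - 1)) s *
            (ρ / (β + ρ) * (1 - Real.exp (-(β + ρ) * (t - s))))) ∧
    μR * θ t + μI * θ t * (ρ / (β + ρ)) * (1 - Real.exp (-(β + ρ) * t)) +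
        αS * ∑' k : ℕ, (k : ℝ) * p k * θ t *
          -∫ s in (0 : ℝ)..t,
              deriv (fun u => θ u ^ (k - 1)) s *
                (ρ / (β + ρ) * (1 - Real.exp (-(β + ρ) * (t - s)))) =
      μR * θ t + μ * ρ / β * θ t * (1 - θ t) :=
  stmt8_general β ρ μ μS μI μR αS p θ hβ hρ hμ hμsum hmeanSummable hμSdef hθ0 hθmem hθderiv t ht
end
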